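/- arXiv:0907.1591 — 6 statements merged into one kernel-verified Lean document; each statement's English description precedes it below -/
import Mathlib

section
/- Let G be a finite simple graph whose edges can be oriented so that every vertex has indegree at most k, and suppose Δ(G) ≥ 2k. Then ρ(G) ≤ 2√(k(Δ(G) − k)). -/
open SimpleGraph Finset
open scoped Classical

noncomputable def specRad {V : Type*} [Fintype V] [DecidableEq V] (G : SimpleGraph V) : ℝ :=
  sSup {μ : ℝ | Module.End.HasEigenvalue (Matrix.toLin' (G.adjMatrix ℝ)) μ}


/-!
Write the adjacency matrix as `M + Mᵀ`, where `M` is the 0/1 matrix of the orientation, so that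
`μ ‖x‖² = 2 xᵀ M x` for an eigenpair `(μ, x)`. Bounding each oriented edge `u → v` by the weighted
AM–GM inequality `2 √(k (Δ - k)) x_u x_v ≤ k x_u² + (Δ - k) x_v²` and double counting gives
`√(k (Δ - k)) μ ‖x‖² ≤ ∑_v (k out(v) + (Δ - k) in(v)) x_v²`. As `out(v) + in(v) ≤ Δ`, `in(v) ≤ k`
and `Δ - 2k ≥ 0`, each weight is at most `k Δ + (Δ - 2k) k = 2 k (Δ - k)`.
-/

open Matrix

noncomputable section

variable {V : Type*}

def orientMatrix (r : V → V → Prop) : Matrix V V ℝ := Matrix.of fun u v => if r u v then 1 else 0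

theorem adjMatrix_eq_orientMatrix_add_transpose {G : SimpleGraph V} {r : V → V → Prop}
    (horient : ∀ u v, G.Adj u v ↔ (r u v ∨ r v u)) (hanti : ∀ u v, ¬ (r u v ∧ r v u)) :
    G.adjMatrix ℝ = orientMatrix r + (orientMatrix r)ᵀ := by
  ext u v
  by_cases h₁ : r u v <;> by_cases h₂ : r v u
  · exact absurd ⟨h₁, h₂⟩ (hanti u v)
  all_goals simp [orientMatrix, adjMatrix_apply, horient, h₁, h₂]

variable [Fintype V]

def outdeg (r : V → V → Prop) (v : V) : ℕ := #{u | r v u}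

def indeg (r : V → V → Prop) (v : V) : ℕ := #{u | r u v}

theorem outdeg_add_indeg {G : SimpleGraph V} {r : V → V → Prop}
    (horient : ∀ u v, G.Adj u v ↔ (r u v ∨ r v u)) (hanti : ∀ u v, ¬ (r u v ∧ r v u)) (v : V) :
    outdeg r v + indeg r v = G.degree v := by
  rw [← card_neighborFinset_eq_degree, outdeg, indeg, ← card_union_of_disjoint]
  · congr 1
    ext u
    simp [horient]
  · exact disjoint_filter.2 fun u _ h₁ h₂ => hanti v u ⟨h₁, h₂⟩

theorem sum_sum_ite_add_eq_sum_outdeg_indeg (r : V → V → Prop) (f g : V → ℝ) :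
    ∑ u, ∑ v, (if r u v then f u + g v else 0) = ∑ v, (outdeg r v * f v + indeg r v * g v) := by
  simp only [ite_add_zero, sum_add_distrib]
  rw [sum_comm (f := fun u v => if r u v then g v else 0)]
  simp [outdeg, indeg, sum_ite, sum_const, nsmul_eq_mul]

theorem dotProduct_orientMatrix_mulVec (r : V → V → Prop) (x : V → ℝ) :
    x ⬝ᵥ (orientMatrix r *ᵥ x) = ∑ u, ∑ v, if r u v then x u * x v else 0 := by
  simp [dotProduct, mulVec, orientMatrix, mul_sum]

theorem two_mul_sqrt_mul_dotProduct_orientMatrix_mulVec_le (r : V → V → Prop) {a b : ℝ}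
    (ha : 0 ≤ a) (hb : 0 ≤ b) (x : V → ℝ) :
    2 * √(a * b) * (x ⬝ᵥ (orientMatrix r *ᵥ x)) ≤
      ∑ v, (a * outdeg r v + b * indeg r v) * x v ^ 2 := by
  have amgm (y z : ℝ) : 2 * √(a * b) * (y * z) ≤ a * y ^ 2 + b * z ^ 2 :=
    calc 2 * √(a * b) * (y * z) = 2 * (√a * y) * (√b * z) := by rw [Real.sqrt_mul ha]; ring
      _ ≤ (√a * y) ^ 2 + (√b * z) ^ 2 := two_mul_le_add_sq _ _
      _ = a * y ^ 2 + b * z ^ 2 := by rw [mul_pow, mul_pow, Real.sq_sqrt ha, Real.sq_sqrt hb]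
  calc 2 * √(a * b) * (x ⬝ᵥ (orientMatrix r *ᵥ x))
      = ∑ u, ∑ v, if r u v then 2 * √(a * b) * (x u * x v) else 0 := by
        simp only [dotProduct_orientMatrix_mulVec, mul_sum, mul_ite, mul_zero]
    _ ≤ ∑ u, ∑ v, if r u v then a * x u ^ 2 + b * x v ^ 2 else 0 := by
        gcongr with u _ v _
        split_ifs
        exacts [amgm _ _, le_rfl]
    _ = _ := by
        rw [sum_sum_ite_add_eq_sum_outdeg_indeg]
        exact sum_congr rfl fun v _ => by ring

end

theorem Module.End.HasEigenvector.mul_dotProduct_self {V R : Type*} [Fintype V] [DecidableEq V]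
    [CommRing R] {A : Matrix V V R} {μ : R} {x : V → R}
    (hx : Module.End.HasEigenvector (toLin' A) μ x) :
    μ * (x ⬝ᵥ x) = x ⬝ᵥ (A *ᵥ x) := by
  rw [← toLin'_apply, hx.apply_eq_smul, dotProduct_smul, smul_eq_mul]

theorem eigenvalue_le_of_orientation {V : Type*} [Fintype V] [DecidableEq V] {G : SimpleGraph V}
    {r : V → V → Prop} {k : ℕ} (horient : ∀ u v, G.Adj u v ↔ (r u v ∨ r v u))
    (hanti : ∀ u v, ¬ (r u v ∧ r v u)) (hindeg : ∀ v, indeg r v ≤ k)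
    (hD : 2 * k ≤ G.maxDegree) {μ : ℝ}
    (hμ : Module.End.HasEigenvalue (toLin' (G.adjMatrix ℝ)) μ) :
    μ ≤ 2 * √(k * (G.maxDegree - k)) := by
  obtain ⟨x, hx⟩ := hμ.exists_hasEigenvector
  have hS : 0 < x ⬝ᵥ x := (Fintype.sum_nonneg fun v => mul_self_nonneg (x v)).lt_of_ne'
    (dotProduct_self_eq_zero.not.2 hx.2)
  have hμS : μ * (x ⬝ᵥ x) = 2 * (x ⬝ᵥ (orientMatrix r *ᵥ x)) := by
    rw [hx.mul_dotProduct_self, adjMatrix_eq_orientMatrix_add_transpose horient hanti, add_mulVec,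
      dotProduct_add, mulVec_transpose, dotProduct_comm x (x ᵥ* _), ← dotProduct_mulVec, two_mul]
  rcases k.eq_zero_or_pos with rfl | hk
  · have hr : orientMatrix r = 0 := by
      ext u v
      have : ¬ r u v := fun h =>
        (card_pos.2 ⟨u, mem_filter.2 ⟨mem_univ u, h⟩⟩).ne' (Nat.le_zero.1 (hindeg v))
      simp [orientMatrix, this]
    have hμ0 : μ * (x ⬝ᵥ x) = 0 := by simpa [hr] using hμS
    simp [(mul_eq_zero.1 hμ0).resolve_right hS.ne']
  have hk' : (0 : ℝ) < k := by exact_mod_cast hk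
  have hkΔ : (2 * k : ℝ) ≤ G.maxDegree := by exact_mod_cast hD
  have hdeg (v : V) : (outdeg r v + indeg r v : ℝ) ≤ G.maxDegree := by
    exact_mod_cast (outdeg_add_indeg horient hanti v).trans_le (G.degree_le_maxDegree v)
  set Δ : ℝ := (G.maxDegree : ℝ)
  have hprod : 0 < k * (Δ - k) := mul_pos hk' (by linarith)
  set s := √(k * (Δ - k))
  have hs : 0 < s := Real.sqrt_pos.2 hprod
  have hweight (v : V) : k * (outdeg r v : ℝ) + (Δ - k) * indeg r v ≤ 2 * s ^ 2 := by
    have hin : (indeg r v : ℝ) ≤ k := by exact_mod_cast hindeg v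
    have := hdeg v
    rw [Real.sq_sqrt hprod.le]
    nlinarith
  have key : s * (μ * (x ⬝ᵥ x)) ≤ s * (2 * s * (x ⬝ᵥ x)) :=
    calc s * (μ * (x ⬝ᵥ x)) = 2 * s * (x ⬝ᵥ (orientMatrix r *ᵥ x)) := by rw [hμS]; ring
      _ ≤ ∑ v, (k * outdeg r v + (Δ - k) * indeg r v) * x v ^ 2 :=
        two_mul_sqrt_mul_dotProduct_orientMatrix_mulVec_le r (by positivity) (by linarith) x
      _ ≤ ∑ v, 2 * s ^ 2 * x v ^ 2 := by gcongr with v; exact hweight v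
      _ = s * (2 * s * (x ⬝ᵥ x)) := by
        simp only [dotProduct, mul_sum]
        exact sum_congr rfl fun v _ => by ring
  exact le_of_mul_le_mul_right (le_of_mul_le_mul_left key hs) hS

theorem hayes_orientation_bound {V : Type*} [Fintype V] [DecidableEq V]
    (G : SimpleGraph V) (k : ℕ) (r : V → V → Prop)
    (horient : ∀ u v, G.Adj u v ↔ (r u v ∨ r v u))
    (hanti : ∀ u v, ¬ (r u v ∧ r v u))
    (hindeg : ∀ v, (Finset.univ.filter (fun u => r u v)).card ≤ k)
    (hD : 2 * k ≤ G.maxDegree) :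
    specRad G ≤ 2 * Real.sqrt ((k : ℝ) * ((G.maxDegree : ℝ) - k)) :=
  Real.sSup_le (fun _ hμ => eigenvalue_le_of_orientation horient hanti hindeg hD hμ) (by positivity)
end

section
/- Every finite simple k-degenerate graph G with Δ(G) ≥ 2k satisfies ρ(G) ≤ 2√(k(Δ(G) − k)). -/
open SimpleGraph Finset
open scoped Classical

/-- `G` is `k`-degenerate: every nonempty (induced) subgraph has a vertex of degree at most `k`. -/
def Degenerate {V : Type*} [Fintype V] [DecidableEq V] (G : SimpleGraph V) (k : ℕ) : Prop :=
  ∀ s : Finset V, s.Nonempty → ∃ v ∈ s, (s.filter (fun u => G.Adj v u)).card ≤ k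

/-!
Order the vertices by a degeneracy ordering, so that every vertex has at most `k` neighbours of
higher rank, and orient each edge upwards. For `t ≥ 1`, the AM-GM bound
`2 x_v x_u ≤ t x_v² + t⁻¹ x_u²` on each edge `v → u` gives
`xᵀ A x ≤ ∑ᵥ (t·out(v) + t⁻¹·in(v)) x_v² ≤ (t k + (Δ - k) / t) ‖x‖²`.
Since `Δ ≥ 2k`, the choice `t = √((Δ - k) / k)` is admissible and turns the bound into
`2 √(k (Δ - k))`; the Rayleigh quotient then bounds every eigenvalue.
-/

open Matrix

theorem eq_bot_of_degenerate_zero {V : Type*} [Fintype V] [DecidableEq V] {G : SimpleGraph V}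
    (hdeg : Degenerate G 0) : G = ⊥ := by
  ext v u
  simp only [bot_adj, iff_false]
  intro h
  obtain ⟨w, hw, hc⟩ := hdeg {v, u} (insert_nonempty _ _)
  rw [Nat.le_zero, card_eq_zero, filter_eq_empty_iff] at hc
  rcases mem_insert.1 hw with rfl | hw
  · exact hc (by simp) h
  · rw [mem_singleton.1 hw] at hc
    exact hc (by simp) h.symm

theorem Degenerate.exists_rank {V : Type*} [Fintype V] [DecidableEq V] {G : SimpleGraph V}
    {k : ℕ} (hdeg : Degenerate G k) :
    ∃ r : V → ℕ, Function.Injective r ∧ ∀ v, #{u ∈ G.neighborFinset v | r v < r u} ≤ k := by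
  suffices h : ∀ s : Finset V, ∃ r : V → ℕ,
      Set.InjOn r s ∧ ∀ v ∈ s, #{u ∈ s | G.Adj v u ∧ r v < r u} ≤ k by
    obtain ⟨r, hinj, hr⟩ := h univ
    refine ⟨r, Set.injOn_univ.1 (by simpa using hinj), fun v => ?_⟩
    simpa [neighborFinset_eq_filter, filter_filter] using hr v (mem_univ v)
  intro s
  induction s using Finset.strongInduction with
  | _ s ih =>
  rcases s.eq_empty_or_nonempty with rfl | hs
  · exact ⟨0, by simp, by simp⟩
  -- `v` has at most `k` neighbours in `s`; rank it below the ranking of `s.erase v`.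
  obtain ⟨v, hv, hvk⟩ := hdeg s hs
  obtain ⟨r, hinj, hr⟩ := ih (s.erase v) (erase_ssubset hv)
  refine ⟨fun u => if u = v then 0 else r u + 1, fun a ha b hb hab => ?_, fun u hu => ?_⟩
  · by_cases hav : a = v <;> by_cases hbv : b = v <;> simp only [hav, hbv, if_true, if_false,
      right_eq_add, add_eq_zero, one_ne_zero, and_false, add_left_inj] at hab
    · rw [hav, hbv]
    · exact hinj (mem_coe.2 (mem_erase.2 ⟨hav, ha⟩)) (mem_coe.2 (mem_erase.2 ⟨hbv, hb⟩)) hab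
  · by_cases huv : u = v
    · subst huv
      refine (card_le_card fun w hw => ?_).trans hvk
      simp only [mem_filter] at hw ⊢
      exact ⟨hw.1, hw.2.1⟩
    · refine (card_le_card fun w hw => ?_).trans (hr u (mem_erase.2 ⟨huv, hu⟩))
      by_cases hwv : w = v <;> simp_all

theorem Module.End.HasEigenvalue.le_of_dotProduct_mulVec_le {n : Type*} [Fintype n]
    [DecidableEq n] {A : Matrix n n ℝ} {μ C : ℝ}
    (hμ : Module.End.HasEigenvalue (toLin' A) μ)
    (hA : ∀ x, x ⬝ᵥ A *ᵥ x ≤ C * (x ⬝ᵥ x)) : μ ≤ C := by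
  obtain ⟨x, hx⟩ := hμ.exists_hasEigenvector
  have hAx : A *ᵥ x = μ • x := by simpa using hx.apply_eq_smul
  have hpos : 0 < x ⬝ᵥ x := by simpa using dotProduct_self_star_pos_iff.2 hx.2
  have := hA x
  rw [hAx, dotProduct_smul, smul_eq_mul] at this
  exact le_of_mul_le_mul_right this hpos

theorem SimpleGraph.dotProduct_adjMatrix_mulVec_le {V : Type*} [Fintype V]
    (G : SimpleGraph V) {w : V → V → ℝ} (hw : ∀ v u, G.Adj v u → 0 < w v u)
    (hw_mul : ∀ v u, G.Adj v u → w v u * w u v = 1) (x : V → ℝ) :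
    x ⬝ᵥ G.adjMatrix ℝ *ᵥ x ≤ ∑ v, (∑ u ∈ G.neighborFinset v, w v u) * x v ^ 2 := by
  have amgm : ∀ v u, G.Adj v u → 2 * (x v * x u) ≤ w v u * x v ^ 2 + w u v * x u ^ 2 := by
    intro v u h
    have hpos := hw v u h
    rw [eq_inv_of_mul_eq_one_right (hw_mul v u h), ← sub_nonneg]
    have hsq : w v u * x v ^ 2 + (w v u)⁻¹ * x u ^ 2 - 2 * (x v * x u)
        = (w v u)⁻¹ * (w v u * x v - x u) ^ 2 := by
      field_simp
      ring
    rw [hsq]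
    positivity
  have hswap : ∑ v, ∑ u, (if G.Adj v u then w u v * x u ^ 2 else 0)
      = ∑ v, ∑ u, (if G.Adj v u then w v u * x v ^ 2 else 0) := by
    rw [sum_comm]
    exact sum_congr rfl fun u _ => sum_congr rfl fun v _ => by rw [G.adj_comm]
  have hrow : ∑ v, ∑ u, (if G.Adj v u then w v u * x v ^ 2 else 0)
      = ∑ v, (∑ u ∈ G.neighborFinset v, w v u) * x v ^ 2 := by
    simp [neighborFinset_eq_filter, sum_filter, sum_mul]
  have hle : 2 * ∑ v, ∑ u, (if G.Adj v u then x v * x u else 0)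
      ≤ ∑ v, ∑ u, ((if G.Adj v u then w v u * x v ^ 2 else 0)
        + (if G.Adj v u then w u v * x u ^ 2 else 0)) := by
    simp_rw [mul_sum]
    gcongr with v _ u _
    split_ifs with h
    · exact amgm v u h
    · simp
  rw [dotProduct_mulVec_adjMatrix]
  simp_rw [sum_add_distrib] at hle
  linarith

theorem mul_add_inv_mul_le {t a b k D : ℝ} (ht : 1 ≤ t) (hak : a ≤ k) (habD : a + b ≤ D) :
    t * a + t⁻¹ * b ≤ t * k + (D - k) / t := by
  have ht0 : 0 < t := one_pos.trans_le ht
  have hinv : t⁻¹ ≤ t := (inv_le_one_of_one_le₀ ht).trans ht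
  calc t * a + t⁻¹ * b ≤ t * a + t⁻¹ * (D - a) := by gcongr; linarith
    _ = (t - t⁻¹) * a + t⁻¹ * D := by ring
    _ ≤ (t - t⁻¹) * k + t⁻¹ * D := by gcongr
    _ = t * k + (D - k) / t := by ring

theorem exists_one_le_mul_add_div_eq {k m : ℝ} (hk : 0 < k) (hkm : k ≤ m) :
    ∃ t, 1 ≤ t ∧ t * k + m / t = 2 * √(k * m) := by
  have hsk : 0 < √k := Real.sqrt_pos.2 hk
  have hsm : 0 < √m := Real.sqrt_pos.2 (hk.trans_le hkm)
  refine ⟨√m / √k, (one_le_div hsk).2 (Real.sqrt_le_sqrt hkm), ?_⟩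
  rw [Real.sqrt_mul hk.le]
  field_simp
  rw [Real.sq_sqrt hk.le, Real.sq_sqrt (hk.le.trans hkm)]
  ring

theorem Degenerate.dotProduct_adjMatrix_mulVec_le {V : Type*} [Fintype V] [DecidableEq V]
    {G : SimpleGraph V} {k : ℕ} (hdeg : Degenerate G k) {t : ℝ} (ht : 1 ≤ t) (x : V → ℝ) :
    x ⬝ᵥ G.adjMatrix ℝ *ᵥ x ≤ (t * k + (G.maxDegree - k) / t) * (x ⬝ᵥ x) := by
  obtain ⟨r, hr, hout⟩ := hdeg.exists_rank
  have ht0 : 0 < t := one_pos.trans_le ht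
  -- Orient each edge towards the endpoint of higher rank: weight `t` at its tail, `t⁻¹` at its head.
  have hw_mul : ∀ v u, G.Adj v u →
      (if r v < r u then t else t⁻¹) * (if r u < r v then t else t⁻¹) = 1 := by
    intro v u h
    rcases lt_or_gt_of_ne (hr.ne h.ne) with h' | h' <;> simp [h', h'.not_gt, ht0.ne']
  refine (G.dotProduct_adjMatrix_mulVec_le (fun v u _ => by split_ifs <;> positivity)
    hw_mul x).trans ?_
  rw [dotProduct, mul_sum]
  refine sum_le_sum fun v _ => ?_
  rw [← sq]
  gcongr
  rw [sum_ite, sum_const, sum_const, nsmul_eq_mul, nsmul_eq_mul, mul_comm, mul_comm _ t⁻¹]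
  refine mul_add_inv_mul_le ht (by exact_mod_cast hout v) ?_
  rw [← Nat.cast_add, card_filter_add_card_filter_not, card_neighborFinset_eq_degree]
  exact_mod_cast G.degree_le_maxDegree v

theorem hayes_degenerate_bound {V : Type*} [Fintype V] [DecidableEq V]
    (G : SimpleGraph V) (k : ℕ) (hdeg : Degenerate G k) (hD : 2 * k ≤ G.maxDegree) :
    specRad G ≤ 2 * Real.sqrt ((k : ℝ) * ((G.maxDegree : ℝ) - k)) := by
  obtain ⟨t, ht, hC⟩ : ∃ t : ℝ, 1 ≤ t ∧
      t * k + (G.maxDegree - k) / t = 2 * √(k * (G.maxDegree - k)) := by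
    rcases k.eq_zero_or_pos with rfl | hk
    · obtain rfl := eq_bot_of_degenerate_zero hdeg
      exact ⟨1, le_rfl, by simp⟩
    · have hD' : (2 * k : ℝ) ≤ G.maxDegree := by exact_mod_cast hD
      exact exists_one_le_mul_add_div_eq (by exact_mod_cast hk) (by linarith)
  refine Real.sSup_le (fun μ hμ => hμ.le_of_dotProduct_mulVec_le fun x => ?_) (by positivity)
  rw [← hC]
  exact hdeg.dotProduct_adjMatrix_mulVec_le ht x
end

section
/- Every finite simple planar graph G with Δ(G) ≥ 6 satisfies ρ(G) ≤ 2√(3(Δ(G) − 3)). -/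
open SimpleGraph Finset
open scoped Classical

/-- Planarity, via the edge bound `|E(H)| ≤ 3|V(H)| - 6` for every subgraph `H` on ≥ 3 vertices. -/
def PlanarEB {V : Type*} [Fintype V] [DecidableEq V] (G : SimpleGraph V) : Prop :=
  ∀ s : Finset V, 3 ≤ s.card →
    (G.edgeFinset.filter (fun e => ∀ v ∈ e, v ∈ s)).card + 6 ≤ 3 * s.card

/-!
Since every vertex set `S` spans at most `3|S|` edges, Hall's theorem assigns to each edge one of
three slots at one of its endpoints injectively; orienting each edge away from its assigned
endpoint gives an orientation with all out-degrees at most `3` (Hakimi).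

For an eigenvector `x` of `μ`, bound each term `2 x_u x_v` of `μ ∑ x_v²` by `c x_u² + c⁻¹ x_v²`
along the arc `u → v`, where `c = √((Δ - 3) / 3)`. A vertex then collects the coefficient
`c · outdeg + c⁻¹ · indeg ≤ 3c + (Δ - 3) c⁻¹ = 2√(3(Δ - 3))`, the inequality because
`outdeg ≤ 3`, `outdeg + indeg ≤ Δ` and `c ≥ c⁻¹` once `Δ ≥ 6`.
-/

theorem two_mul_mul_le_of_mul_eq_one {p q : ℝ} (hp : 0 < p) (hpq : p * q = 1) (a b : ℝ) :
    2 * (a * b) ≤ p * a ^ 2 + q * b ^ 2 := by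
  have : 0 ≤ p * (p * a ^ 2 + q * b ^ 2 - 2 * (a * b)) := by
    nlinarith [sq_nonneg (p * a - b)]
  nlinarith [(mul_nonneg_iff_of_pos_left hp).1 this]

theorem mul_add_inv_mul_le_s5 {c x y k d : ℝ} (hc : 1 ≤ c) (hxk : x ≤ k) (hxy : x + y ≤ d) :
    c * x + c⁻¹ * y ≤ c * k + c⁻¹ * (d - k) := by
  have hc_inv : c⁻¹ ≤ 1 := inv_le_one_of_one_le₀ hc
  have : 0 ≤ c⁻¹ := by positivity
  nlinarith

theorem sqrt_div_sqrt_mul_add_le {k d x y : ℝ} (hk : 0 < k) (hkd : 2 * k ≤ d) (hxk : x ≤ k)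
    (hxy : x + y ≤ d) : √(d - k) / √k * x + √k / √(d - k) * y ≤ 2 * √(k * (d - k)) := by
  have ha : 0 < √k := Real.sqrt_pos.2 hk
  have hb : 0 < √(d - k) := Real.sqrt_pos.2 (by linarith)
  have hc : 1 ≤ √(d - k) / √k := (one_le_div ha).2 (Real.sqrt_le_sqrt (by linarith))
  calc √(d - k) / √k * x + √k / √(d - k) * y
      ≤ √(d - k) / √k * k + (√(d - k) / √k)⁻¹ * (d - k) := by
        simpa only [inv_div] using mul_add_inv_mul_le_s5 hc hxk hxy
    _ = 2 * √(k * (d - k)) := by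
        have hka := Real.sq_sqrt hk.le
        have hkb := Real.sq_sqrt (show 0 ≤ d - k by linarith)
        rw [Real.sqrt_mul hk.le]
        field_simp
        rw [hka, hkb]
        ring

section

variable {V : Type*} [Fintype V] [DecidableEq V] {G : SimpleGraph V}

theorem PlanarEB.card_edges_within_le (hG : PlanarEB G) (S : Finset V) :
    #{e ∈ G.edgeFinset | ∀ v ∈ e, v ∈ S} ≤ 3 * #S := by
  by_cases hS : 3 ≤ #S
  · linarith [hG S hS]
  · have hsub : {e ∈ G.edgeFinset | ∀ v ∈ e, v ∈ S} ⊆ S.sym2 := fun e he =>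
      mem_sym2_iff.2 (mem_filter.1 he).2
    have hchoose : (#S + 1).choose 2 ≤ 3 * #S := by
      interval_cases #S <;> simp [Nat.choose]
    exact (card_le_card hsub).trans ((card_sym2 S).le.trans hchoose)

namespace SimpleGraph

theorem exists_injective_endpoint_slot {k : ℕ}
    (h : ∀ S : Finset V, #{e ∈ G.edgeFinset | ∀ v ∈ e, v ∈ S} ≤ k * #S) :
    ∃ f : G.edgeSet → V × ℕ, Function.Injective f ∧
      ∀ e : G.edgeSet, (f e).1 ∈ (e : Sym2 V) ∧ (f e).2 < k := by
  let slots : G.edgeSet → Finset (V × ℕ) := fun e => (e : Sym2 V).toFinset ×ˢ range k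
  suffices ∃ f : G.edgeSet → V × ℕ, Function.Injective f ∧ ∀ e, f e ∈ slots e by
    simpa [slots] using this
  refine (all_card_le_biUnion_card_iff_exists_injective slots).1 fun s => ?_
  let S : Finset V := s.biUnion fun e => (e : Sym2 V).toFinset
  have hslots : s.biUnion slots = S ×ˢ range k := by
    ext ⟨v, i⟩
    simp only [slots, S, mem_biUnion, mem_product]
    tauto
  calc #s = #(s.map (Function.Embedding.subtype _)) := (card_map _).symm
    _ ≤ #{e ∈ G.edgeFinset | ∀ v ∈ e, v ∈ S} := card_le_card fun e he => by
      obtain ⟨e, he', rfl⟩ := mem_map.1 he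
      simp only [mem_filter, mem_edgeFinset, S, mem_biUnion, Sym2.mem_toFinset]
      exact ⟨e.2, fun v hv => ⟨e, he', hv⟩⟩
    _ ≤ k * #S := h S
    _ = #(s.biUnion slots) := by rw [hslots, card_product, card_range, mul_comm]

theorem exists_orientation_outdegree_le {k : ℕ}
    (h : ∀ S : Finset V, #{e ∈ G.edgeFinset | ∀ v ∈ e, v ∈ S} ≤ k * #S) :
    ∃ t : Sym2 V → V, (∀ e ∈ G.edgeSet, t e ∈ e) ∧
      ∀ v, #{u ∈ G.neighborFinset v | t s(v, u) = v} ≤ k := by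
  obtain ⟨f, hf_inj, hf_mem⟩ := exists_injective_endpoint_slot h
  let t : Sym2 V → V := fun e => if he : e ∈ G.edgeSet then (f ⟨e, he⟩).1 else (Quot.out e).1
  have ht : ∀ e (he : e ∈ G.edgeSet), t e = (f ⟨e, he⟩).1 := fun e he => dif_pos he
  refine ⟨t, fun e he => ht e he ▸ (hf_mem ⟨e, he⟩).1, fun v => ?_⟩
  let slot : V → ℕ := fun u => if hu : G.Adj v u then (f ⟨s(v, u), hu⟩).2 else 0
  have hslot : ∀ u (hu : G.Adj v u), slot u = (f ⟨s(v, u), hu⟩).2 := fun u hu => dif_pos hu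
  calc #{u ∈ G.neighborFinset v | t s(v, u) = v} ≤ #(range k) := by
        refine card_le_card_of_injOn slot (fun u hu => ?_) fun u₁ hu₁ u₂ hu₂ heq => ?_
        · obtain ⟨hu, -⟩ := mem_filter.1 hu
          rw [mem_neighborFinset] at hu
          simpa [hslot u hu] using (hf_mem ⟨s(v, u), hu⟩).2
        · obtain ⟨hu₁, ht₁⟩ := mem_filter.1 hu₁
          obtain ⟨hu₂, ht₂⟩ := mem_filter.1 hu₂
          rw [mem_neighborFinset] at hu₁ hu₂
          rw [ht _ hu₁] at ht₁
          rw [ht _ hu₂] at ht₂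
          rw [hslot u₁ hu₁, hslot u₂ hu₂] at heq
          have := hf_inj (Prod.ext (ht₁.trans ht₂.symm) heq)
          exact Sym2.congr_right.1 (Subtype.ext_iff.1 this)
    _ = k := card_range k

omit [DecidableEq V] in
theorem sum_neighborFinset_swap (f : V → V → ℝ) :
    ∑ v, ∑ u ∈ G.neighborFinset v, f u v = ∑ v, ∑ u ∈ G.neighborFinset v, f v u :=
  sum_comm' (by simp [adj_comm])

theorem le_of_hasEigenvalue_of_weights {μ C : ℝ} (w : V → V → ℝ)
    (hw_pos : ∀ u v, G.Adj u v → 0 < w u v) (hw : ∀ u v, G.Adj u v → w u v * w v u = 1)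
    (hC : ∀ v, ∑ u ∈ G.neighborFinset v, w v u ≤ C)
    (hμ : Module.End.HasEigenvalue (Matrix.toLin' (G.adjMatrix ℝ)) μ) : μ ≤ C := by
  obtain ⟨x, hx⟩ := hμ.exists_hasEigenvector
  have hAx : ∀ v, ∑ u ∈ G.neighborFinset v, x u = μ * x v := fun v => by
    simpa [adjMatrix_mulVec_apply] using congrFun hx.apply_eq_smul v
  have hS : 0 < ∑ v, x v ^ 2 := by
    obtain ⟨v, hv⟩ := Function.ne_iff.1 hx.2
    exact sum_pos' (fun v _ => sq_nonneg (x v)) ⟨v, mem_univ v, pow_two_pos_of_ne_zero hv⟩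
  have key : μ * ∑ v, x v ^ 2 ≤ C * ∑ v, x v ^ 2 := calc
    μ * ∑ v, x v ^ 2 = ∑ v, x v * ∑ u ∈ G.neighborFinset v, x u := by
      rw [mul_sum]
      exact sum_congr rfl fun v _ => by rw [hAx]; ring
    _ = ∑ v, ∑ u ∈ G.neighborFinset v, x v * x u := by simp only [mul_sum]
    _ ≤ ∑ v, ∑ u ∈ G.neighborFinset v, (w v u * x v ^ 2 + w u v * x u ^ 2) / 2 := by
      gcongr with v _ u hu
      have hvu := (mem_neighborFinset G v u).1 hu
      linarith [two_mul_mul_le_of_mul_eq_one (hw_pos v u hvu) (hw v u hvu) (x v) (x u)]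
    _ = ∑ v, (∑ u ∈ G.neighborFinset v, w v u) * x v ^ 2 := by
      simp only [add_div, sum_add_distrib, sum_neighborFinset_swap (fun u v => w u v * x u ^ 2 / 2)]
      simp only [sum_mul, ← sum_add_distrib]
      ring_nf
    _ ≤ C * ∑ v, x v ^ 2 := by
      rw [mul_sum]
      gcongr with v _
      exact hC v
  exact le_of_mul_le_mul_right key hS

theorem le_of_hasEigenvalue_of_orientation {k : ℕ} (hk : 0 < k) (hkΔ : 2 * k ≤ G.maxDegree)
    {t : Sym2 V → V} (ht : ∀ e ∈ G.edgeSet, t e ∈ e)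
    (hout : ∀ v, #{u ∈ G.neighborFinset v | t s(v, u) = v} ≤ k) {μ : ℝ}
    (hμ : Module.End.HasEigenvalue (Matrix.toLin' (G.adjMatrix ℝ)) μ) :
    μ ≤ 2 * √(k * (G.maxDegree - k)) := by
  have hk' : (0 : ℝ) < k := by exact_mod_cast hk
  have hkΔ' : 2 * (k : ℝ) ≤ G.maxDegree := by exact_mod_cast hkΔ
  set a := √k
  set b := √(G.maxDegree - k)
  have ha : 0 < a := Real.sqrt_pos.2 hk'
  have hb : 0 < b := Real.sqrt_pos.2 (by linarith)
  let w : V → V → ℝ := fun u v => if t s(u, v) = u then b / a else a / b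
  refine le_of_hasEigenvalue_of_weights w (fun u v _ => ?_) (fun u v huv => ?_) (fun v => ?_) hμ
  · dsimp only [w]
    split_ifs <;> positivity
  · simp only [w, Sym2.eq_swap (a := v) (b := u)]
    rcases Sym2.mem_iff.1 (ht s(u, v) huv) with h | h
    · simp [h, huv.ne, ha.ne', hb.ne']
    · simp [h, huv.ne', ha.ne', hb.ne']
  · have hsplit := card_filter_add_card_filter_not (s := G.neighborFinset v) (t s(v, ·) = v)
    rw [card_neighborFinset_eq_degree] at hsplit
    have hcount : (#{u ∈ G.neighborFinset v | t s(v, u) = v} : ℝ)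
        + #{u ∈ G.neighborFinset v | ¬t s(v, u) = v} ≤ G.maxDegree := by
      exact_mod_cast hsplit.trans_le (G.degree_le_maxDegree v)
    calc ∑ u ∈ G.neighborFinset v, w v u
        = b / a * #{u ∈ G.neighborFinset v | t s(v, u) = v}
          + a / b * #{u ∈ G.neighborFinset v | ¬t s(v, u) = v} := by
          simp only [w, sum_ite, sum_const, nsmul_eq_mul]
          ring
      _ ≤ 2 * √(k * (G.maxDegree - k)) :=
          sqrt_div_sqrt_mul_add_le hk' hkΔ' (by exact_mod_cast hout v) hcount

end SimpleGraph

end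

theorem planar_spectral_radius_bound {V : Type*} [Fintype V] [DecidableEq V]
    (G : SimpleGraph V) (hplanar : PlanarEB G) (hD : 6 ≤ G.maxDegree) :
    specRad G ≤ 2 * Real.sqrt (3 * ((G.maxDegree : ℝ) - 3)) := by
  obtain ⟨t, ht, hout⟩ := exists_orientation_outdegree_le hplanar.card_edges_within_le
  refine Real.sSup_le (fun μ hμ => ?_) (by positivity)
  simpa using le_of_hasEigenvalue_of_orientation (k := 3) three_pos hD ht hout hμ
end

section
/- Let G₁, …, G_m be subgraphs of a finite simple graph G such that each edge of G appears in at least p of the subgraphs (p ≥ 1). Then ρ(G) ≤ (1/p)·∑_{i=1}^m ρ(G_i). -/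
open SimpleGraph Finset
open scoped Classical

/-!
Let `x` be a unit eigenvector of `A(G)` for its top eigenvalue `ρ(G)`, so that
`ρ(G) = xᵀ A(G) x`. As `A(G)` is entrywise nonnegative, passing to `|x|` can only increase this
quadratic form, and the covering hypothesis says `p • A(G) ≤ ∑ᵢ A(Gᵢ)` entrywise. Hence
`p ρ(G) ≤ ∑ᵢ |x|ᵀ A(Gᵢ) |x| ≤ ∑ᵢ ρ(Gᵢ)`, the last step by the Rayleigh bound
`yᵀ A y ≤ λ_max(A) yᵀ y` for symmetric `A`.
-/

open Matrix

namespace Matrix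

variable {n R : Type*} [Fintype n] [CommRing R] [LinearOrder R] [IsStrictOrderedRing R]

theorem dotProduct_mulVec_le_abs {A : Matrix n n R} (hA : ∀ i j, 0 ≤ A i j) (x : n → R) :
    x ⬝ᵥ A *ᵥ x ≤ |x| ⬝ᵥ A *ᵥ |x| := by
  simp only [dotProduct, mulVec, Finset.mul_sum]
  refine Finset.sum_le_sum fun i _ ↦ Finset.sum_le_sum fun j _ ↦ ?_
  calc x i * (A i j * x j) ≤ |x i * (A i j * x j)| := le_abs_self _
    _ = |x| i * (A i j * |x| j) := by simp [abs_mul, abs_of_nonneg (hA i j)]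

theorem dotProduct_mulVec_mono {A B : Matrix n n R} (hAB : ∀ i j, A i j ≤ B i j) {y : n → R}
    (hy : 0 ≤ y) : y ⬝ᵥ A *ᵥ y ≤ y ⬝ᵥ B *ᵥ y := by
  simp only [dotProduct, mulVec, Finset.mul_sum]
  gcongr with i _ j _
  · exact hy i
  · exact hy j
  · exact hAB i j

end Matrix

namespace Matrix.IsHermitian

variable {n : Type*} [Fintype n] [DecidableEq n] {A : Matrix n n ℝ}

theorem dotProduct_mulVec_le_of_eigenvalues_le (hA : A.IsHermitian) {M : ℝ} (hM : ∀ i, hA.eigenvalues i ≤ M)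
    (y : n → ℝ) : y ⬝ᵥ A *ᵥ y ≤ M * (y ⬝ᵥ y) := by
  have hB : (algebraMap ℝ (Matrix n n ℝ) M - A).IsHermitian :=
    (isHermitian_diagonal _).sub hA
  -- the eigenvalues of `M - A` are the numbers `M - λᵢ`
  have hpsd : (algebraMap ℝ (Matrix n n ℝ) M - A).PosSemidef := by
    rw [hB.posSemidef_iff_eigenvalues_nonneg]
    intro i
    have hi := hB.eigenvalues_mem_spectrum_real i
    rw [← spectrum.singleton_sub_eq, hA.spectrum_real_eq_range_eigenvalues] at hi
    obtain ⟨_, rfl, _, ⟨j, rfl⟩, hj⟩ := hi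
    simpa [← hj] using hM j
  have hy := hpsd.dotProduct_mulVec_nonneg y
  rwa [Algebra.algebraMap_eq_smul_one, sub_mulVec, smul_mulVec, one_mulVec, dotProduct_sub,
    dotProduct_smul, smul_eq_mul, sub_nonneg] at hy

theorem dotProduct_self_eigenvectorBasis (hA : A.IsHermitian) (j : n) :
    ⇑(hA.eigenvectorBasis j) ⬝ᵥ ⇑(hA.eigenvectorBasis j) = 1 := by
  have h := real_inner_self_eq_norm_sq (hA.eigenvectorBasis j)
  rw [(hA.eigenvectorBasis).orthonormal.1 j, EuclideanSpace.inner_eq_star_dotProduct] at h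
  simpa using h

theorem isGreatest_sSup_eigenvalues [Nonempty n] (hA : A.IsHermitian) :
    IsGreatest ((fun x ↦ x ⬝ᵥ A *ᵥ x) '' {x | x ⬝ᵥ x = 1}) (sSup (Set.range hA.eigenvalues)) := by
  have hle : ∀ i, hA.eigenvalues i ≤ sSup (Set.range hA.eigenvalues) :=
    fun i ↦ le_csSup (Set.finite_range _).bddAbove ⟨i, rfl⟩
  obtain ⟨j, hj⟩ := (Set.range_nonempty hA.eigenvalues).csSup_mem (Set.finite_range _)
  refine ⟨⟨_, hA.dotProduct_self_eigenvectorBasis j, ?_⟩, ?_⟩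
  · dsimp only
    rw [hA.mulVec_eigenvectorBasis, dotProduct_smul, hA.dotProduct_self_eigenvectorBasis, hj,
      smul_eq_mul, mul_one]
  · rintro _ ⟨y, hy, rfl⟩
    simpa [show y ⬝ᵥ y = 1 from hy] using hA.dotProduct_mulVec_le_of_eigenvalues_le hle y

theorem setOf_hasEigenvalue_toLin'_eq_range_eigenvalues (hA : A.IsHermitian) :
    {μ | Module.End.HasEigenvalue (toLin' A) μ} = Set.range hA.eigenvalues := by
  ext μ
  rw [Set.mem_ofPred_eq, Module.End.hasEigenvalue_iff_mem_spectrum,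
    show toLin' A = toLinAlgEquiv' A from rfl,
    AlgEquiv.spectrum_eq, hA.spectrum_real_eq_range_eigenvalues]

end Matrix.IsHermitian

namespace SimpleGraph

theorem natCast_smul_adjMatrix_le_sum {V : Type*} {m : ℕ} (G : SimpleGraph V)
    (Gs : Fin m → SimpleGraph V) (p : ℕ) (hcover : ∀ u v, G.Adj u v → p ≤ #{i | (Gs i).Adj u v}) (u v : V) :
    ((p : ℝ) • G.adjMatrix ℝ) u v ≤ (∑ i, (Gs i).adjMatrix ℝ) u v := by
  rw [Matrix.smul_apply, Matrix.sum_apply]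
  by_cases h : G.Adj u v
  · simpa [h, Finset.sum_boole] using hcover u v h
  · simp only [adjMatrix_apply, h, if_false, smul_zero]
    positivity

variable {V : Type*} [Fintype V] [DecidableEq V]

theorem specRad_eq_sSup_eigenvalues (H : SimpleGraph V) :
    specRad H = sSup (Set.range (H.isHermitian_adjMatrix ℝ).eigenvalues) := by
  rw [specRad, (H.isHermitian_adjMatrix ℝ).setOf_hasEigenvalue_toLin'_eq_range_eigenvalues]

theorem specRad_of_isEmpty [IsEmpty V] (H : SimpleGraph V) : specRad H = 0 := by
  rw [specRad_eq_sSup_eigenvalues, Set.range_eq_empty, Real.sSup_empty]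

theorem isGreatest_specRad [Nonempty V] (H : SimpleGraph V) :
    IsGreatest ((fun x ↦ x ⬝ᵥ H.adjMatrix ℝ *ᵥ x) '' {x | x ⬝ᵥ x = 1}) (specRad H) := by
  rw [specRad_eq_sSup_eigenvalues]
  exact (H.isHermitian_adjMatrix ℝ).isGreatest_sSup_eigenvalues

end SimpleGraph

theorem spectral_radius_fractional_subadditive_general {V : Type*} [Fintype V] [DecidableEq V]
    (G : SimpleGraph V) (m p : ℕ) (hp : 1 ≤ p)
    (Gs : Fin m → SimpleGraph V)
    (hcover : ∀ u v, G.Adj u v → p ≤ (Finset.univ.filter (fun i => (Gs i).Adj u v)).card) :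
    specRad G ≤ (1 / (p : ℝ)) * ∑ i, specRad (Gs i) := by
  cases isEmpty_or_nonempty V
  · simp [specRad_of_isEmpty]
  obtain ⟨⟨x, hx, hρ⟩, -⟩ := isGreatest_specRad G
  have habs : |x| ⬝ᵥ |x| = 1 := by simpa [dotProduct, abs_mul_abs_self] using hx
  have hp0 : (0 : ℝ) < p := by exact_mod_cast hp
  rw [one_div, inv_mul_eq_div, le_div_iff₀ hp0, mul_comm, ← hρ]
  calc (p : ℝ) * (x ⬝ᵥ G.adjMatrix ℝ *ᵥ x)
      ≤ p * (|x| ⬝ᵥ G.adjMatrix ℝ *ᵥ |x|) := by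
        gcongr
        exact dotProduct_mulVec_le_abs (fun u v ↦ by simp [adjMatrix_apply]; positivity) x
    _ = |x| ⬝ᵥ ((p : ℝ) • G.adjMatrix ℝ) *ᵥ |x| := by
        rw [smul_mulVec, dotProduct_smul, smul_eq_mul]
    _ ≤ |x| ⬝ᵥ (∑ i, (Gs i).adjMatrix ℝ) *ᵥ |x| :=
        dotProduct_mulVec_mono (natCast_smul_adjMatrix_le_sum G Gs p hcover) (abs_nonneg x)
    _ = ∑ i, |x| ⬝ᵥ (Gs i).adjMatrix ℝ *ᵥ |x| := by
        rw [sum_mulVec, dotProduct_sum]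
    _ ≤ ∑ i, specRad (Gs i) :=
        sum_le_sum fun i _ ↦ (isGreatest_specRad (Gs i)).2 ⟨|x|, habs, rfl⟩

theorem spectral_radius_fractional_subadditive {V : Type*} [Fintype V] [DecidableEq V]
    (G : SimpleGraph V) (m p : ℕ) (hp : 1 ≤ p)
    (Gs : Fin m → SimpleGraph V) (hsub : ∀ i, Gs i ≤ G)
    (hcover : ∀ u v, G.Adj u v → p ≤ (Finset.univ.filter (fun i => (Gs i).Adj u v)).card) :
    specRad G ≤ (1 / (p : ℝ)) * ∑ i, specRad (Gs i) :=
  spectral_radius_fractional_subadditive_general G m p hp Gs hcover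
end

section
/- Suppose the edge set of K_{3,n} is partitioned into a 2-degenerate graph T and a graph L of maximum degree at most s. Then n ≤ 3s + 2. -/
open SimpleGraph Finset
open scoped Classical

/-
Call a vertex `b` of the large side full if all its edges to the small side `α` lie in `T`.
Full vertices together with `α` span a complete bipartite subgraph of `T`; since `T` is
`k`-degenerate and `k < |α|`, there are at most `k` of them. Every other vertex of the
large side is joined by an edge of `L` to some vertex of `α`, and each of these has at most
`s` edges in `L`, so there are at most `|α| * s` non-full vertices.
-/

theorem Degenerate.card_le_of_forall_adj {V : Type*} [Fintype V] [DecidableEq V]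
    {G : SimpleGraph V} {k : ℕ} (hG : Degenerate G k) {A B : Finset V} (hA : k < #A)
    (hAB : ∀ a ∈ A, ∀ b ∈ B, G.Adj a b) : #B ≤ k := by
  obtain ⟨v, hv, hdeg⟩ :=
    hG (A ∪ B) ((card_pos.1 (Nat.zero_lt_of_lt hA)).mono subset_union_left)
  rcases mem_union.1 hv with hvA | hvB
  · refine (card_le_card fun b hb => ?_).trans hdeg
    exact mem_filter.2 ⟨mem_union_right _ hb, hAB v hvA b hb⟩
  · refine absurd ((card_le_card fun a ha => ?_).trans hdeg) hA.not_ge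
    exact mem_filter.2 ⟨mem_union_left _ ha, (hAB a ha v hvB).symm⟩

theorem card_filter_adj_comp_le_degree {V β : Type*} [Fintype V] [Fintype β]
    (G : SimpleGraph V) (v : V) {f : β → V} (hf : Function.Injective f) :
    #(univ.filter fun b => G.Adj v (f b)) ≤ G.degree v := by
  rw [← card_neighborFinset_eq_degree]
  exact card_le_card_of_injOn f (fun b hb => (mem_neighborFinset _ _ _).2 (mem_filter.1 hb).2)
    hf.injOn

theorem card_le_of_sup_eq_completeBipartiteGraph {α β : Type*} [Fintype α] [Fintype β]
    [DecidableEq α] [DecidableEq β] {k s : ℕ} {T L : SimpleGraph (α ⊕ β)}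
    (hunion : T ⊔ L = completeBipartiteGraph α β) (hk : k < Fintype.card α)
    (hT : Degenerate T k) (hL : ∀ v, L.degree v ≤ s) :
    Fintype.card β ≤ Fintype.card α * s + k := by
  set F : Finset β := univ.filter fun b => ∀ a, T.Adj (Sum.inl a) (Sum.inr b)
  have hF : #F ≤ k := by
    have := hT.card_le_of_forall_adj (A := univ.map .inl) (B := F.map .inr)
      (by rwa [card_map, card_univ]) (by simp +contextual [F])
    rwa [card_map] at this
  have hcover :
      Fᶜ ⊆ univ.biUnion fun a => univ.filter fun b => L.Adj (Sum.inl a) (Sum.inr b) := by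
    intro b hb
    obtain ⟨a, ha⟩ : ∃ a, ¬T.Adj (Sum.inl a) (Sum.inr b) := by simpa [F] using hb
    have hTL : (T ⊔ L).Adj (Sum.inl a) (Sum.inr b) := by simp [hunion]
    exact mem_biUnion.2 ⟨a, mem_univ _, mem_filter.2 ⟨mem_univ _, hTL.resolve_left ha⟩⟩
  have hFc : #Fᶜ ≤ Fintype.card α * s := calc
    #Fᶜ ≤ ∑ a, #(univ.filter fun b => L.Adj (Sum.inl a) (Sum.inr b)) :=
      (card_le_card hcover).trans card_biUnion_le
    _ ≤ ∑ _a : α, s := sum_le_sum fun a _ =>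
      (card_filter_adj_comp_le_degree L _ Sum.inr_injective).trans (hL _)
    _ = Fintype.card α * s := by rw [sum_const, card_univ, smul_eq_mul]
  rw [← card_add_card_compl F]
  omega

theorem K3n_decomposition_bound_general (n s : ℕ) (T L : SimpleGraph (Fin 3 ⊕ Fin n))
    (hunion : T ⊔ L = completeBipartiteGraph (Fin 3) (Fin n))
    (hT : Degenerate T 2) (hL : ∀ v, L.degree v ≤ s) :
    n ≤ 3 * s + 2 := by
  simpa using card_le_of_sup_eq_completeBipartiteGraph hunion (by simp) hT hL

theorem K3n_decomposition_bound (n s : ℕ) (T L : SimpleGraph (Fin 3 ⊕ Fin n))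
    (hunion : T ⊔ L = completeBipartiteGraph (Fin 3) (Fin n)) (hdisj : T ⊓ L = ⊥)
    (hT : Degenerate T 2) (hL : ∀ v, L.degree v ≤ s) :
    n ≤ 3 * s + 2 :=
  K3n_decomposition_bound_general n s T L hunion hT hL
end

section
/- Let G be a graph with vertex set partitioned into finite levels S₀, S₁, S₂, … such that all edges of G join consecutive levels, |S_i| = k·r^i for r = (d−k)/k > 1, and the number of edges between S_i and S_{i+1} equals (d−k)|S_i|. Then for any q with 0 < q < √(k/(d−k)), the function f defined by f(v) = q^i for v ∈ S_i lies in ℓ²(V) and satisfies ⟨f, Af⟩ = 2q(d−k)·‖f‖². -/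
/-! Group the vertices by level and the edges by the level of their lower endpoint. Level `Sᵢ`
contributes `|Sᵢ| q^{2i}` to `‖f‖²`; since edges join consecutive levels, each of the `(d-k)|Sᵢ|`
edges from `Sᵢ` up to `Sᵢ₊₁` contributes `q^{2i+1}` to `∑_{uv ∈ E} f(u) f(v)`. Hence the edge sum
is `q(d-k)` times the vertex sum, and both are geometric series of ratio `r q² < 1`, which is the
hypothesis `q² < k/(d-k)`. -/

theorem hasSum_of_const_on_fibers {α β : Type*} {p : α → β} {g : α → ℝ} {c : β → ℝ}
    {n : β → ℕ} {s : ℝ} (hg : ∀ a, 0 ≤ g a) (hconst : ∀ a, g a = c (p a))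
    (hfin : ∀ b, Finite {a // p a = b}) (hcard : ∀ b, Nat.card {a // p a = b} = n b)
    (hs : HasSum (fun b => n b * c b) s) : HasSum g s := by
  have hfiber : ∀ b, ∑' a : {a // p a = b}, g a = n b * c b := fun b => by
    rw [tsum_congr fun a : {a // p a = b} => (hconst a).trans (congrArg c a.2), tsum_const,
      hcard, nsmul_eq_mul]
  have hsigma : Summable fun x : Σ b, {a // p a = b} => g x.2 := by
    refine (summable_sigma_of_nonneg fun _ => hg _).mpr ⟨fun _ => Summable.of_finite, ?_⟩
    exact hs.summable.congr fun b => (hfiber b).symm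
  have hg_summable : Summable g := (Equiv.sigmaFiberEquiv p).summable_iff.mp hsigma
  convert hg_summable.hasSum
  calc s = ∑' b, n b * c b := hs.tsum_eq.symm
    _ = ∑' b, ∑' a : {a // p a = b}, g a := tsum_congr fun b => (hfiber b).symm
    _ = ∑' x : Σ b, {a // p a = b}, g x.2 := hsigma.tsum_sigma.symm
    _ = ∑' a, g a := (Equiv.sigmaFiberEquiv p).tsum_eq g

theorem hasSum_card_mul_sq_pow (k r : ℕ) {q : ℝ} (hrq : r * q ^ 2 < 1) :
    HasSum (fun i : ℕ => ((k * r ^ i : ℕ) : ℝ) * (q ^ i) ^ 2) (k / (1 - r * q ^ 2)) := by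
  rw [div_eq_mul_inv]
  refine ((hasSum_geometric_of_lt_one (by positivity) hrq).mul_left _).congr_fun fun i => ?_
  push_cast
  ring

theorem natCast_div_mul_sq_lt_one {m n : ℕ} (hm : 0 < m) (hn : 0 < n) {q : ℝ} (hq0 : 0 ≤ q)
    (hq : q < √((n : ℝ) / m)) : ((m / n : ℕ) : ℝ) * q ^ 2 < 1 := by
  have hq2 : q ^ 2 < n / m := (Real.lt_sqrt hq0).mp hq
  calc ((m / n : ℕ) : ℝ) * q ^ 2 ≤ (m : ℝ) / n * q ^ 2 := by gcongr; exact Nat.cast_div_le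
    _ < (m : ℝ) / n * (n / m) := by gcongr
    _ = 1 := by field_simp

def lowerLevel {V : Type*} (ℓ : V → ℕ) : Sym2 V → ℕ :=
  Sym2.lift ⟨fun u v => min (ℓ u) (ℓ v), fun _ _ => min_comm _ _⟩

section ConsecutiveLevels

variable {V : Type*} {G : SimpleGraph V} {ℓ : V → ℕ}

theorem lowerLevel_eq_iff (hedges : ∀ u v : V, G.Adj u v → ℓ u + 1 = ℓ v ∨ ℓ v + 1 = ℓ u)
    {e : Sym2 V} (he : e ∈ G.edgeSet) (i : ℕ) :
    lowerLevel ℓ e = i ↔ ∃ u v : V, e = s(u, v) ∧ ℓ u = i ∧ ℓ v = i + 1 := by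
  induction e using Sym2.ind with
  | h u v =>
    have huv := hedges u v he
    simp only [lowerLevel, Sym2.lift_mk]
    constructor
    · rintro rfl
      rcases huv with h | h
      · exact ⟨u, v, rfl, by omega, by omega⟩
      · exact ⟨v, u, Sym2.eq_swap, by omega, by omega⟩
    · rintro ⟨a, b, hab, rfl, hb⟩
      rcases Sym2.eq_iff.mp hab with ⟨rfl, rfl⟩ | ⟨rfl, rfl⟩ <;> omega

def lowerLevelFiberEquiv (hedges : ∀ u v : V, G.Adj u v → ℓ u + 1 = ℓ v ∨ ℓ v + 1 = ℓ u)
    (i : ℕ) : {e : G.edgeSet // lowerLevel ℓ e.1 = i} ≃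
    {e : Sym2 V | e ∈ G.edgeSet ∧ ∃ u v : V, e = s(u, v) ∧ ℓ u = i ∧ ℓ v = i + 1} :=
  (Equiv.subtypeSubtypeEquivSubtypeInter (· ∈ G.edgeSet) (lowerLevel ℓ · = i)).trans
    (Equiv.subtypeEquivRight fun _ => and_congr_right fun he => lowerLevel_eq_iff hedges he i)

theorem lift_pow_mul_pow_eq (hedges : ∀ u v : V, G.Adj u v → ℓ u + 1 = ℓ v ∨ ℓ v + 1 = ℓ u)
    {e : Sym2 V} (he : e ∈ G.edgeSet) (q : ℝ) :
    Sym2.lift ⟨fun u v => q ^ ℓ u * q ^ ℓ v, fun _ _ => mul_comm _ _⟩ e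
      = q ^ (2 * lowerLevel ℓ e + 1) := by
  induction e using Sym2.ind with
  | h u v =>
    have huv := hedges u v he
    simp only [lowerLevel, Sym2.lift_mk, ← pow_add]
    congr 1
    omega

end ConsecutiveLevels

theorem layered_test_function_general {V : Type*} (G : SimpleGraph V) (k d : ℕ)
    (hk : 0 < k) (hkd : k < d) (hr : 2 * k < d) (ℓ : V → ℕ)
    (hlevels : ∀ i : ℕ, {v : V | ℓ v = i}.ncard = k * ((d - k) / k) ^ i)
    (hedges : ∀ u v : V, G.Adj u v → ℓ u + 1 = ℓ v ∨ ℓ v + 1 = ℓ u)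
    (hcount : ∀ i : ℕ,
      {e : Sym2 V | e ∈ G.edgeSet ∧
        ∃ u v : V, e = s(u, v) ∧ ℓ u = i ∧ ℓ v = i + 1}.ncard
        = (d - k) * (k * ((d - k) / k) ^ i))
    (q : ℝ) (hq0 : 0 < q) (hq : q < Real.sqrt ((k : ℝ) / ((d : ℝ) - k))) :
    Summable (fun v : V => (q ^ ℓ v) ^ 2) ∧
      2 * ∑' e : G.edgeSet,
          Sym2.lift ⟨fun u v => q ^ ℓ u * q ^ ℓ v, fun u v => mul_comm _ _⟩ e.1
        = 2 * q * ((d : ℝ) - k) * ∑' v : V, (q ^ ℓ v) ^ 2 := by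
  set r := (d - k) / k
  have hr_pos : 0 < r := Nat.div_pos (by omega) hk
  have hdk : 0 < d - k := Nat.sub_pos_of_lt hkd
  have hrq : (r : ℝ) * q ^ 2 < 1 :=
    natCast_div_mul_sq_lt_one hdk hk hq0.le (by rwa [Nat.cast_sub hkd.le])
  have hcardV (i : ℕ) : Nat.card {v // ℓ v = i} = k * r ^ i :=
    (Nat.card_coe_set_eq _).trans (hlevels i)
  have hcardE (i : ℕ) :
      Nat.card {e : G.edgeSet // lowerLevel ℓ e.1 = i} = (d - k) * (k * r ^ i) := by
    rw [Nat.card_congr (lowerLevelFiberEquiv hedges i), Nat.card_coe_set_eq, hcount]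
  have hV : HasSum (fun v => (q ^ ℓ v) ^ 2) (k / (1 - r * q ^ 2)) :=
    hasSum_of_const_on_fibers (fun _ => by positivity) (fun _ => rfl)
      (fun i => Nat.finite_of_card_ne_zero (by rw [hcardV i]; positivity)) hcardV
      (hasSum_card_mul_sq_pow k r hrq)
  have hE : HasSum (fun e : G.edgeSet =>
      Sym2.lift ⟨fun u v => q ^ ℓ u * q ^ ℓ v, fun _ _ => mul_comm _ _⟩ e.1)
      (q * ((d : ℝ) - k) * (k / (1 - r * q ^ 2))) := by
    refine hasSum_of_const_on_fibers (p := fun e => lowerLevel ℓ e.1)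
      (c := fun i => q ^ (2 * i + 1))
      (fun e => by rw [lift_pow_mul_pow_eq hedges e.2]; positivity)
      (fun e => lift_pow_mul_pow_eq hedges e.2 q)
      (fun i => Nat.finite_of_card_ne_zero (by rw [hcardE i]; positivity)) hcardE
      (((hasSum_card_mul_sq_pow k r hrq).mul_left (q * ((d : ℝ) - k))).congr_fun fun i => ?_)
    push_cast [Nat.cast_sub hkd.le]
    ring
  refine ⟨hV.summable, ?_⟩
  rw [hE.tsum_eq, hV.tsum_eq]
  ring

/-- For a graph layered into levels `S_i` of size `k·r^i` (`r = (d-k)/k > 1`), with all edges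
between consecutive levels and `(d-k)|S_i|` edges between `S_i` and `S_{i+1}`, the test function
`f(v) = q^{ℓ(v)}` with `0 < q < √(k/(d-k))` lies in `ℓ²` and satisfies
`⟨f, Af⟩ = 2q(d-k)·‖f‖²`. -/
theorem layered_test_function {V : Type*} (G : SimpleGraph V) (k d : ℕ)
    (hk : 0 < k) (hkd : k < d) (hdvd : k ∣ d) (hr : 2 * k < d) (ℓ : V → ℕ)
    (hlevels : ∀ i : ℕ, {v : V | ℓ v = i}.ncard = k * ((d - k) / k) ^ i)
    (hedges : ∀ u v : V, G.Adj u v → ℓ u + 1 = ℓ v ∨ ℓ v + 1 = ℓ u)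
    (hcount : ∀ i : ℕ,
      {e : Sym2 V | e ∈ G.edgeSet ∧
        ∃ u v : V, e = s(u, v) ∧ ℓ u = i ∧ ℓ v = i + 1}.ncard
        = (d - k) * (k * ((d - k) / k) ^ i))
    (q : ℝ) (hq0 : 0 < q) (hq : q < Real.sqrt ((k : ℝ) / ((d : ℝ) - k))) :
    Summable (fun v : V => (q ^ ℓ v) ^ 2) ∧
      2 * ∑' e : G.edgeSet,
          Sym2.lift ⟨fun u v => q ^ ℓ u * q ^ ℓ v, fun u v => mul_comm _ _⟩ e.1
        = 2 * q * ((d : ℝ) - k) * ∑' v : V, (q ^ ℓ v) ^ 2 :=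
  layered_test_function_general G k d hk hkd hr ℓ hlevels hedges hcount q hq0 hq
end
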